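/- For every positive integer N and complex z in a compact set, e^{−(√N + z)²} · (√(2N) + √2 z)^{2N} / (2N−1)!! = (e^{−2z²}/√2) · (1 + o(1)) as N → ∞; equivalently, lim_{N→∞} √2 · e^{−(√N+z)²} (√(2N)+√2 z)^{2N} / (2N−1)!! = e^{−2z²}. -/

import Mathlib

open Filter

/-- The double factorial of odd numbers, `(2N-1)!! = (2N)! / (2^N N!)`, as a real number. -/
noncomputable def oddDoubleFactorial (N : ℕ) : ℝ :=
  (Nat.factorial (2 * N) : ℝ) / ((2 : ℝ) ^ N * (Nat.factorial N : ℝ))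

/-!
With `s = √N` one has `(√(2N) + √2 z)^{2N} = 2^N (s + z)^{2N}` and
`e^{-(s+z)²} (s+z)^{2N} = e^{-N} N^N · exp (2N log (1 + z/s) - 2sz - z²)`.
By Stirling's formula the prefactor `√2 · 2^N N^N e^{-N} / (2N-1)!!` is the ratio
`stirlingSeq N / stirlingSeq (2N)`, which tends to `1`. The third-order Taylor bound for
`log (1 + w)` shows that the exponent is `-2z² + O(|z|³/√N)`, uniformly on bounded sets.
-/

open Topology Stirling

theorem stirlingSeq_div_stirlingSeq_two_mul {N : ℕ} (hN : N ≠ 0) :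
    stirlingSeq N / stirlingSeq (2 * N) =
      √2 * 2 ^ N * (N : ℝ) ^ N * Real.exp (-N) / oddDoubleFactorial N := by
  have hsqrt : √(2 * ((2 * N : ℕ) : ℝ)) = √2 * √(2 * N) := by
    push_cast
    rw [← Real.sqrt_mul zero_le_two]
  have hexp : Real.exp (-N) = (Real.exp 1 ^ N)⁻¹ := by
    rw [← Real.exp_nat_mul, ← Real.exp_neg, mul_one]
  unfold stirlingSeq oddDoubleFactorial
  rw [hsqrt, hexp]
  push_cast
  simp only [div_pow, mul_pow]
  field_simp
  ring

theorem tendsto_sqrt_two_mul_two_pow_div_oddDoubleFactorial :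
    Tendsto (fun N : ℕ ↦ √2 * 2 ^ N * (N : ℝ) ^ N * Real.exp (-N) / oddDoubleFactorial N)
      atTop (𝓝 1) := by
  have hpi : √Real.pi ≠ 0 := (Real.sqrt_pos.2 Real.pi_pos).ne'
  have hratio := tendsto_stirlingSeq_sqrt_pi.div
    (tendsto_stirlingSeq_sqrt_pi.comp (tendsto_id.const_mul_atTop' two_pos)) hpi
  rw [div_self hpi] at hratio
  refine hratio.congr' ?_
  filter_upwards [eventually_ne_atTop 0] with N hN
  exact stirlingSeq_div_stirlingSeq_two_mul hN

namespace Complex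

theorem norm_log_one_add_sub_le_of_norm_le_half {w : ℂ} (hw : ‖w‖ ≤ 1 / 2) :
    ‖log (1 + w) - (w - w ^ 2 / 2)‖ ≤ 2 / 3 * ‖w‖ ^ 3 := by
  have htaylor : logTaylor 3 w = w - w ^ 2 / 2 := by
    norm_num [logTaylor, Finset.sum_range_succ, sub_eq_add_neg, neg_div]
  have hinv : (1 - ‖w‖)⁻¹ ≤ 2 := by
    rw [inv_le_comm₀ (by linarith) two_pos]
    linarith
  calc ‖log (1 + w) - (w - w ^ 2 / 2)‖ ≤ ‖w‖ ^ 3 * (1 - ‖w‖)⁻¹ / 3 := by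
        rw [← htaylor]
        exact_mod_cast norm_log_sub_logTaylor_le 2 (by linarith)
    _ ≤ ‖w‖ ^ 3 * 2 / 3 := by gcongr
    _ = 2 / 3 * ‖w‖ ^ 3 := by ring

theorem norm_two_mul_sq_log_one_add_div_sub_le {s : ℝ} (hs : 0 < s) {z : ℂ} (hz : 2 * ‖z‖ ≤ s) :
    ‖(2 * s ^ 2 * log (1 + z / s) - 2 * s * z - z ^ 2) - (-2 * z ^ 2)‖ ≤
      4 / 3 * ‖z‖ ^ 3 / s := by
  have hs' : (s : ℂ) ≠ 0 := ofReal_ne_zero.2 hs.ne'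
  have hw : ‖z / s‖ = ‖z‖ / s := by rw [norm_div, norm_real, Real.norm_of_nonneg hs.le]
  have hw_half : ‖z / s‖ ≤ 1 / 2 := by
    rw [hw, div_le_iff₀ hs]
    linarith
  have hsplit : (2 * s ^ 2 * log (1 + z / s) - 2 * s * z - z ^ 2) - (-2 * z ^ 2) =
      2 * s ^ 2 * (log (1 + z / s) - (z / s - (z / s) ^ 2 / 2)) := by
    field_simp
    ring
  calc _ = 2 * s ^ 2 * ‖log (1 + z / s) - (z / s - (z / s) ^ 2 / 2)‖ := by
        rw [hsplit, norm_mul, norm_mul, norm_pow, norm_real, Real.norm_of_nonneg hs.le]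
        norm_num
    _ ≤ 2 * s ^ 2 * (2 / 3 * (‖z‖ / s) ^ 3) := by
        rw [← hw]
        gcongr
        exact norm_log_one_add_sub_le_of_norm_le_half hw_half
    _ = 4 / 3 * ‖z‖ ^ 3 / s := by
        field_simp
        ring

theorem exp_neg_add_sq_mul_add_pow {s z : ℂ} (hs : s ≠ 0) (hsz : s + z ≠ 0) (n : ℕ) :
    exp (-(s + z) ^ 2) * (s + z) ^ (2 * n) =
      exp (-s ^ 2) * s ^ (2 * n) * exp (2 * n * log (1 + z / s) - 2 * s * z - z ^ 2) := by
  have hsz' : 1 + z / s ≠ 0 := by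
    rwa [one_add_div hs, div_ne_zero_iff, and_iff_left hs]
  have hpow : (s + z) ^ (2 * n) = s ^ (2 * n) * exp (2 * n * log (1 + z / s)) := by
    rw [show (2 : ℂ) * n = ((2 * n : ℕ) : ℂ) by push_cast; ring, exp_nat_mul, exp_log hsz',
      ← mul_pow, mul_add, mul_one, mul_div_cancel₀ z hs]
  have hexp : exp (-(s + z) ^ 2) = exp (-s ^ 2) * exp (-2 * s * z - z ^ 2) := by
    rw [← exp_add]
    ring_nf
  rw [hpow, hexp, show 2 * n * log (1 + z / s) - 2 * s * z - z ^ 2 =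
      2 * n * log (1 + z / s) + (-2 * s * z - z ^ 2) by ring, exp_add]
  ring

end Complex

theorem tendstoUniformlyOn_two_mul_log_one_add_div_sqrt {K : Set ℂ}
    (hK : Bornology.IsBounded K) :
    TendstoUniformlyOn
      (fun (N : ℕ) (z : ℂ) ↦
        2 * N * Complex.log (1 + z / (√N : ℝ)) - 2 * (√N : ℝ) * z - z ^ 2)
      (fun z ↦ -2 * z ^ 2) atTop K := by
  obtain ⟨R, hR⟩ := hK.exists_norm_le
  have hsqrt : Tendsto (fun N : ℕ ↦ √(N : ℝ)) atTop atTop :=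
    Real.tendsto_sqrt_atTop.comp tendsto_natCast_atTop_atTop
  have hbound : Tendsto (fun N : ℕ ↦ 4 / 3 * R ^ 3 / √(N : ℝ)) atTop (𝓝 0) :=
    tendsto_const_nhds.div_atTop hsqrt
  rw [Metric.tendstoUniformlyOn_iff]
  intro ε hε
  filter_upwards [eventually_ne_atTop 0, hsqrt.eventually_ge_atTop (2 * R),
    hbound.eventually_lt_const hε] with N hN h2R hRε z hz
  have hs : 0 < √(N : ℝ) := by positivity
  have hsq : ((√N : ℝ) : ℂ) ^ 2 = N := by
    rw [← Complex.ofReal_pow, Real.sq_sqrt N.cast_nonneg, Complex.ofReal_natCast]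
  rw [dist_eq_norm', ← hsq]
  calc _ ≤ 4 / 3 * ‖z‖ ^ 3 / √(N : ℝ) :=
        Complex.norm_two_mul_sq_log_one_add_div_sub_le hs (by linarith [hR z hz])
    _ ≤ 4 / 3 * R ^ 3 / √(N : ℝ) := by gcongr; exact hR z hz
    _ < ε := hRε

theorem sqrt_two_mul_cexp_mul_pow_div_oddDoubleFactorial {N : ℕ} (hN : N ≠ 0) {z : ℂ}
    (hz : (Real.sqrt N : ℂ) + z ≠ 0) :
    (Real.sqrt 2 : ℂ) * Complex.exp (-((Real.sqrt N : ℂ) + z) ^ 2) *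
        ((Real.sqrt (2 * N) : ℂ) + (Real.sqrt 2 : ℂ) * z) ^ (2 * N) / (oddDoubleFactorial N : ℂ) =
      ((√2 * 2 ^ N * (N : ℝ) ^ N * Real.exp (-N) / oddDoubleFactorial N : ℝ) : ℂ) *
        Complex.exp (2 * N * Complex.log (1 + z / (√N : ℝ)) - 2 * (√N : ℝ) * z - z ^ 2) := by
  have hs : ((√N : ℝ) : ℂ) ≠ 0 := Complex.ofReal_ne_zero.2 (by positivity)
  have hsq : ((√N : ℝ) : ℂ) ^ 2 = N := by
    rw [← Complex.ofReal_pow, Real.sq_sqrt N.cast_nonneg, Complex.ofReal_natCast]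
  have hsq2 : ((√2 : ℝ) : ℂ) ^ 2 = 2 := by
    rw [← Complex.ofReal_pow, Real.sq_sqrt zero_le_two, Complex.ofReal_ofNat]
  have hfactor : ((√(2 * N) : ℝ) : ℂ) + (√2 : ℝ) * z = (√2 : ℝ) * ((√N : ℝ) + z) := by
    rw [Real.sqrt_mul zero_le_two]
    push_cast
    ring
  have key := Complex.exp_neg_add_sq_mul_add_pow hs hz N
  rw [pow_mul ((√N : ℝ) : ℂ), hsq] at key
  rw [hfactor, mul_pow, pow_mul ((√2 : ℝ) : ℂ), hsq2]
  push_cast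
  linear_combination ((√2 : ℝ) * 2 ^ N / (oddDoubleFactorial N : ℂ)) * key

theorem stmt15 (K : Set ℂ) (hK : IsCompact K) :
    TendstoUniformlyOn
      (fun (N : ℕ) (z : ℂ) =>
        (Real.sqrt 2 : ℂ) * Complex.exp (-((Real.sqrt N : ℂ) + z) ^ 2) *
          ((Real.sqrt (2 * N) : ℂ) + (Real.sqrt 2 : ℂ) * z) ^ (2 * N) /
            (oddDoubleFactorial N : ℂ))
      (fun z => Complex.exp (-2 * z ^ 2)) atTop K := by
  have hfactor := (Complex.continuous_ofReal.tendsto 1).comp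
    tendsto_sqrt_two_mul_two_pow_div_oddDoubleFactorial
  have hexp := (tendstoUniformlyOn_two_mul_log_one_add_div_sqrt hK.isBounded).comp_cexp
    (hK.image (by fun_prop : Continuous fun z : ℂ ↦ (-2 * z ^ 2).re)).bddAbove
  have hprod := (hfactor.tendstoUniformlyOn_const K).tendstoLocallyUniformlyOn.fun_mul₀
    hexp.tendstoLocallyUniformlyOn continuousOn_const (by fun_prop)
  rw [tendstoLocallyUniformlyOn_iff_tendstoUniformlyOn_of_compact hK] at hprod
  refine (hprod.congr ?_).congr_right fun z _ ↦ by simp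
  obtain ⟨R, hR⟩ := hK.isBounded.exists_norm_le
  filter_upwards [eventually_ne_atTop 0, (Real.tendsto_sqrt_atTop.comp
    tendsto_natCast_atTop_atTop).eventually_gt_atTop R] with N hN hRN z hz
  refine (sqrt_two_mul_cexp_mul_pow_div_oddDoubleFactorial hN fun h ↦ ?_).symm
  have hzN : ‖z‖ = √(N : ℝ) := by
    rw [eq_neg_of_add_eq_zero_right h, norm_neg, Complex.norm_real,
      Real.norm_of_nonneg (Real.sqrt_nonneg _)]
  exact hRN.not_ge (hzN.symm.trans_le (hR z hz))
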